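/- arXiv:1211.7050 — 2 statements merged into one kernel-verified Lean document; each statement's English description precedes it below -/
import Mathlib

section
/- Define Σ₀ to be the set of nonzero skew-symmetric real 4×4 matrices σ with electric part e and magnetic part m satisfying ‖e‖ = ‖m‖ and e·m = 0. The action of the full Lorentz group O(1,3) on Σ₀ given by σ ↦ Λ σ Λᵀ is transitive. -/
open Matrix

noncomputable section

def eta : Matrix (Fin 4) (Fin 4) ℝ := Matrix.diagonal ![1, -1, -1, -1]

/-- The full Lorentz group O(1,3): Λᵀ η Λ = η. -/
def IsLorentz (Λ : Matrix (Fin 4) (Fin 4) ℝ) : Prop := Λᵀ * eta * Λ = eta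

/-- Electric part of a skew-symmetric 4×4 matrix: e_k = σ_{0k}. -/
def eVec (σ : Matrix (Fin 4) (Fin 4) ℝ) : Fin 3 → ℝ := ![σ 0 1, σ 0 2, σ 0 3]

/-- Magnetic part: m₁ = σ_{23}, m₂ = σ_{31}, m₃ = σ_{12}. -/
def mVec (σ : Matrix (Fin 4) (Fin 4) ℝ) : Fin 3 → ℝ := ![σ 2 3, σ 3 1, σ 1 2]

/-- Σ₀: nonzero skew-symmetric matrices with ‖e‖ = ‖m‖ and e·m = 0. -/
def InSigma0 (σ : Matrix (Fin 4) (Fin 4) ℝ) : Prop :=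
  σᵀ = -σ ∧ σ ≠ 0 ∧ (∑ i, eVec σ i ^ 2) = (∑ i, mVec σ i ^ 2) ∧
    (∑ i, eVec σ i * mVec σ i) = 0

/-! Every σ ∈ Σ₀ is Lorentz-congruent to the standard null field with e = (1,0,0), m = (0,1,0):
a spatial rotation taking the orthonormal frame (x, y, x × y) to (e, m, e × m)/‖e‖ carries the
standard field of strength ‖e‖ to σ, and a boost along z rescales a null field with e, m ⊥ z by
its Doppler factor c + s, so it reaches any positive strength. Since congruence by the Lorentz
group is an equivalence relation, any two elements of Σ₀ are congruent. -/

namespace Matrix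

variable {n R : Type*} [Fintype n] [CommRing R]

def PreservesForm (J A : Matrix n n R) : Prop := Aᵀ * J * A = J

namespace PreservesForm

variable {J A B : Matrix n n R}

theorem mul (hA : PreservesForm J A) (hB : PreservesForm J B) : PreservesForm J (A * B) := by
  unfold PreservesForm at *
  calc (A * B)ᵀ * J * (A * B) = Bᵀ * (Aᵀ * J * A) * B := by
        simp only [transpose_mul, Matrix.mul_assoc]
    _ = J := by rw [hA, hB]

variable [DecidableEq n]

theorem isUnit_det (hJ : IsUnit J.det) (hA : PreservesForm J A) : IsUnit A.det := by
  have hdet : J.det * (A.det * A.det) = J.det * 1 := by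
    simpa [det_mul, det_transpose, mul_comm, mul_left_comm] using congrArg det hA
  exact .of_mul_eq_one _ (hJ.mul_left_cancel hdet)

theorem inv (hJ : IsUnit J.det) (hA : PreservesForm J A) : PreservesForm J A⁻¹ := by
  have hAA : A * A⁻¹ = 1 := mul_nonsing_inv A (hA.isUnit_det hJ)
  unfold PreservesForm at *
  calc (A⁻¹)ᵀ * J * A⁻¹ = (A⁻¹)ᵀ * (Aᵀ * J * A) * A⁻¹ := by rw [hA]
    _ = (A * A⁻¹)ᵀ * J * (A * A⁻¹) := by simp only [transpose_mul, Matrix.mul_assoc]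
    _ = J := by rw [hAA, transpose_one, Matrix.one_mul, Matrix.mul_one]

end PreservesForm

end Matrix

theorem isUnit_det_eta : IsUnit eta.det := by
  simp [eta, det_diagonal, Fin.prod_univ_four]

def LorentzRelated (σ τ : Matrix (Fin 4) (Fin 4) ℝ) : Prop :=
  ∃ Λ : Matrix (Fin 4) (Fin 4) ℝ, IsLorentz Λ ∧ Λ * σ * Λᵀ = τ

namespace LorentzRelated

variable {σ τ υ : Matrix (Fin 4) (Fin 4) ℝ}

theorem symm (h : LorentzRelated σ τ) : LorentzRelated τ σ := by
  obtain ⟨Λ, hΛ, rfl⟩ := h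
  have hinv : Λ⁻¹ * Λ = 1 := nonsing_inv_mul Λ (PreservesForm.isUnit_det isUnit_det_eta hΛ)
  refine ⟨Λ⁻¹, PreservesForm.inv isUnit_det_eta hΛ, ?_⟩
  calc Λ⁻¹ * (Λ * σ * Λᵀ) * Λ⁻¹ᵀ = (Λ⁻¹ * Λ) * σ * (Λ⁻¹ * Λ)ᵀ := by
        simp only [transpose_mul, Matrix.mul_assoc]
    _ = σ := by rw [hinv, transpose_one, Matrix.one_mul, Matrix.mul_one]

theorem trans (h₁ : LorentzRelated σ τ) (h₂ : LorentzRelated τ υ) : LorentzRelated σ υ := by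
  obtain ⟨Λ₁, hΛ₁, rfl⟩ := h₁
  obtain ⟨Λ₂, hΛ₂, rfl⟩ := h₂
  refine ⟨Λ₂ * Λ₁, PreservesForm.mul hΛ₂ hΛ₁, ?_⟩
  simp only [transpose_mul, Matrix.mul_assoc]

end LorentzRelated

def fieldOf (e m : Fin 3 → ℝ) : Matrix (Fin 4) (Fin 4) ℝ :=
  !![0, e 0, e 1, e 2; -e 0, 0, m 2, -m 1; -e 1, -m 2, 0, m 0; -e 2, m 1, -m 0, 0]

theorem eq_fieldOf_of_transpose_eq_neg {σ : Matrix (Fin 4) (Fin 4) ℝ} (hσ : σᵀ = -σ) :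
    σ = fieldOf (eVec σ) (mVec σ) := by
  have hskew : ∀ i j, σ j i = -σ i j := fun i j => by
    simpa using congrFun (congrFun hσ i) j
  have hdiag : ∀ i, σ i i = 0 := fun i => by linarith [hskew i i]
  ext i j
  fin_cases i <;> fin_cases j <;> simp only [fieldOf, eVec, mVec] <;>
    first | exact hdiag _ | exact hskew _ _ | simp

def stdNullField (a : ℝ) : Matrix (Fin 4) (Fin 4) ℝ := fieldOf ![a, 0, 0] ![0, a, 0]

/-- The boost along the z-axis, with `c`, `s` standing for the `cosh`, `sinh` of the rapidity. -/
def boostZ (c s : ℝ) : Matrix (Fin 4) (Fin 4) ℝ :=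
  !![c, 0, 0, s; 0, 1, 0, 0; 0, 0, 1, 0; s, 0, 0, c]

theorem isLorentz_boostZ {c s : ℝ} (h : c ^ 2 - s ^ 2 = 1) : IsLorentz (boostZ c s) := by
  unfold IsLorentz boostZ eta
  ext i j
  fin_cases i <;> fin_cases j <;> simp [mul_apply, Fin.sum_univ_four] <;> grind

theorem boostZ_mul_stdNullField_mul_transpose (c s a : ℝ) :
    boostZ c s * stdNullField a * (boostZ c s)ᵀ = stdNullField ((c + s) * a) := by
  unfold boostZ stdNullField fieldOf
  ext i j
  fin_cases i <;> fin_cases j <;> simp [mul_apply, Fin.sum_univ_four] <;> ring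

theorem lorentzRelated_stdNullField_of_pos {a : ℝ} (ha : 0 < a) :
    LorentzRelated (stdNullField 1) (stdNullField a) := by
  have hrapidity : ((a + a⁻¹) / 2) ^ 2 - ((a - a⁻¹) / 2) ^ 2 = 1 := by
    field_simp
    ring
  refine ⟨boostZ ((a + a⁻¹) / 2) ((a - a⁻¹) / 2), isLorentz_boostZ hrapidity, ?_⟩
  rw [boostZ_mul_stdNullField_mul_transpose]
  congr 1
  ring

def frameRotation (u v : Fin 3 → ℝ) : Matrix (Fin 4) (Fin 4) ℝ :=
  let w := u ⨯₃ v
  !![1, 0, 0, 0; 0, u 0, v 0, w 0; 0, u 1, v 1, w 1; 0, u 2, v 2, w 2]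

theorem isLorentz_frameRotation {u v : Fin 3 → ℝ} (hu : u ⬝ᵥ u = 1) (hv : v ⬝ᵥ v = 1)
    (huv : u ⬝ᵥ v = 0) : IsLorentz (frameRotation u v) := by
  simp only [dotProduct, Fin.sum_univ_three] at hu hv huv
  unfold IsLorentz frameRotation eta
  ext i j
  fin_cases i <;> fin_cases j <;> simp [mul_apply, Fin.sum_univ_four, cross_apply] <;> grind

/-- The magnetic part comes out as `a • (u × v) × u`, which is `a • v` for orthonormal `u`, `v`. -/
theorem frameRotation_mul_stdNullField_mul_transpose {u v : Fin 3 → ℝ} (hu : u ⬝ᵥ u = 1)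
    (huv : u ⬝ᵥ v = 0) (a : ℝ) :
    frameRotation u v * stdNullField a * (frameRotation u v)ᵀ = fieldOf (a • u) (a • v) := by
  simp only [dotProduct, Fin.sum_univ_three] at hu huv
  unfold frameRotation stdNullField fieldOf
  ext i j
  fin_cases i <;> fin_cases j <;> simp [mul_apply, Fin.sum_univ_four, cross_apply] <;> grind

theorem InSigma0.lorentzRelated_stdNullField {σ : Matrix (Fin 4) (Fin 4) ℝ} (hσ : InSigma0 σ) :
    LorentzRelated (stdNullField 1) σ := by
  obtain ⟨hskew, hne, hnorm, hperp⟩ := hσ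
  have hfield := eq_fieldOf_of_transpose_eq_neg hskew
  set e := eVec σ
  set m := mVec σ
  have hee : e ⬝ᵥ e = m ⬝ᵥ m := by simpa only [dotProduct, sq] using hnorm
  have hem : e ⬝ᵥ m = 0 := hperp
  have hpos : 0 < e ⬝ᵥ e := by
    refine (Fintype.sum_nonneg fun i => mul_self_nonneg (e i)).lt_of_ne' fun he => hne ?_
    rw [hfield, dotProduct_self_eq_zero.mp he, dotProduct_self_eq_zero.mp (hee.symm.trans he)]
    ext i j
    fin_cases i <;> fin_cases j <;> simp [fieldOf]
  set a := √(e ⬝ᵥ e)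
  have ha : 0 < a := Real.sqrt_pos.mpr hpos
  have haa : a ^ 2 = e ⬝ᵥ e := Real.sq_sqrt hpos.le
  have hnormalize : ∀ x y : Fin 3 → ℝ, a⁻¹ • x ⬝ᵥ a⁻¹ • y = x ⬝ᵥ y / e ⬝ᵥ e := fun x y => by
    rw [smul_dotProduct, dotProduct_smul, smul_eq_mul, smul_eq_mul, ← haa]
    field_simp
  have hu : a⁻¹ • e ⬝ᵥ a⁻¹ • e = 1 := by rw [hnormalize, div_self hpos.ne']
  have hv : a⁻¹ • m ⬝ᵥ a⁻¹ • m = 1 := by rw [hnormalize, ← hee, div_self hpos.ne']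
  have huv : a⁻¹ • e ⬝ᵥ a⁻¹ • m = 0 := by rw [hnormalize, hem, zero_div]
  have hrot := frameRotation_mul_stdNullField_mul_transpose hu huv a
  rw [smul_inv_smul₀ ha.ne', smul_inv_smul₀ ha.ne', ← hfield] at hrot
  exact (lorentzRelated_stdNullField_of_pos ha).trans ⟨_, isLorentz_frameRotation hu hv huv, hrot⟩

/-- The action σ ↦ Λ σ Λᵀ of the full Lorentz group O(1,3) on Σ₀ is transitive. -/
theorem stmt2 (σ₀ σ : Matrix (Fin 4) (Fin 4) ℝ)
    (h₀ : InSigma0 σ₀) (h : InSigma0 σ) :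
    ∃ Λ : Matrix (Fin 4) (Fin 4) ℝ, IsLorentz Λ ∧ Λ * σ₀ * Λᵀ = σ :=
  h₀.lorentzRelated_stdNullField.symm.trans h.lorentzRelated_stdNullField
end
end

section
/- Let B_β be the Lorentz boost with velocity β ∈ (−1,1) along the direction n = e₀ × m₀ / ‖e₀ × m₀‖, where σ₀ ∈ Σ₀ has electric part e₀ and magnetic part m₀ (orthogonal and of equal nonzero norm). Then B_β σ₀ B_βᵀ = √((1−β)/(1+β)) · σ₀; i.e., boosting along e₀ × m₀ rescales σ₀ by the Doppler factor λ_β = √((1−β)/(1+β)). -/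
open Matrix

noncomputable section

/-
Orthogonality and equal norms give ‖e₀ × m₀‖ = ‖e₀‖ ‖m₀‖ = e₀ ⬝ e₀, so n = (e₀ ⬝ e₀)⁻¹ (e₀ × m₀),
and (n, e₀, m₀) is a right-handed orthogonal frame: n ⬝ e₀ = 0, n × e₀ = m₀, n × m₀ = -e₀. Under a
boost along n the fields transverse to n mix as e ↦ γ (e + β n × m), m ↦ γ (m - β n × e), so both
are multiplied by γ (1 - β) = √((1 - β)/(1 + β)).
-/
section

variable {R : Type*} [CommRing R]

def fieldMatrix (e m : Fin 3 → R) : Matrix (Fin 4) (Fin 4) R :=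
  !![0, e 0, e 1, e 2; -e 0, 0, m 2, -m 1; -e 1, -m 2, 0, m 0; -e 2, m 1, -m 0, 0]

def boostMatrix (γ β : R) (n : Fin 3 → R) : Matrix (Fin 4) (Fin 4) R :=
  !![γ, -γ * β * n 0, -γ * β * n 1, -γ * β * n 2;
     -γ * β * n 0, 1 + (γ - 1) * n 0 * n 0, (γ - 1) * n 0 * n 1, (γ - 1) * n 0 * n 2;
     -γ * β * n 1, (γ - 1) * n 1 * n 0, 1 + (γ - 1) * n 1 * n 1, (γ - 1) * n 1 * n 2;
     -γ * β * n 2, (γ - 1) * n 2 * n 0, (γ - 1) * n 2 * n 1, 1 + (γ - 1) * n 2 * n 2]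

theorem boostMatrix_transpose (γ β : R) (n : Fin 3 → R) :
    (boostMatrix γ β n)ᵀ = boostMatrix γ β n := by
  ext i j
  fin_cases i <;> fin_cases j <;> simp [boostMatrix, mul_right_comm]

theorem boostMatrix_mul_fieldMatrix_mul_transpose (γ β : R) {n e m : Fin 3 → R}
    (hn_e : n ⬝ᵥ e = 0) (hn_cross_e : n ⨯₃ e = m) (hn_cross_m : n ⨯₃ m = -e) :
    boostMatrix γ β n * fieldMatrix e m * (boostMatrix γ β n)ᵀ =
      (γ * (1 - β)) • fieldMatrix e m := by
  have hdot : n 0 * e 0 + n 1 * e 1 + n 2 * e 2 = 0 := by rwa [vec3_dotProduct] at hn_e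
  have hS0 : n 1 * e 2 - n 2 * e 1 = m 0 := congrFun hn_cross_e 0
  have hS1 : n 2 * e 0 - n 0 * e 2 = m 1 := congrFun hn_cross_e 1
  have hS2 : n 0 * e 1 - n 1 * e 0 = m 2 := congrFun hn_cross_e 2
  have hR0 : n 1 * m 2 - n 2 * m 1 = -e 0 := congrFun hn_cross_m 0
  have hR1 : n 2 * m 0 - n 0 * m 2 = -e 1 := congrFun hn_cross_m 1
  have hR2 : n 0 * m 1 - n 1 * m 0 = -e 2 := congrFun hn_cross_m 2
  set κ := γ ^ 2 - γ - γ ^ 2 * β ^ 2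
  rw [boostMatrix_transpose]
  ext i j
  fin_cases i <;> fin_cases j <;>
    simp only [boostMatrix, fieldMatrix, mul_apply, Fin.sum_univ_four, of_apply, cons_val',
      cons_val_zero, cons_val_one, cons_val, cons_val_fin_one, Matrix.smul_apply, smul_eq_mul,
      Fin.isValue, Fin.zero_eta, Fin.mk_one, Fin.reduceFinMk]
  · ring
  · linear_combination (κ * n 0) * hdot + (γ * β) * hR0
  · linear_combination (κ * n 1) * hdot + (γ * β) * hR1
  · linear_combination (κ * n 2) * hdot + (γ * β) * hR2
  · linear_combination (-κ * n 0) * hdot - (γ * β) * hR0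
  · ring
  · linear_combination ((γ - 1) * n 1) * hR0 - ((γ - 1) * n 0) * hR1 + (γ - γ * β - 1) * hS2
  · linear_combination ((γ - 1) * n 2) * hR0 - ((γ - 1) * n 0) * hR2 - (γ - γ * β - 1) * hS1
  · linear_combination (-κ * n 1) * hdot - (γ * β) * hR1
  · linear_combination (-(γ - 1) * n 1) * hR0 + ((γ - 1) * n 0) * hR1 - (γ - γ * β - 1) * hS2
  · ring
  · linear_combination ((γ - 1) * n 2) * hR1 - ((γ - 1) * n 1) * hR2 + (γ - γ * β - 1) * hS0
  · linear_combination (-κ * n 2) * hdot - (γ * β) * hR2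
  · linear_combination (-(γ - 1) * n 2) * hR0 + ((γ - 1) * n 0) * hR2 + (γ - γ * β - 1) * hS1
  · linear_combination (-(γ - 1) * n 2) * hR1 + ((γ - 1) * n 1) * hR2 - (γ - γ * β - 1) * hS0
  · ring

theorem smul_cross_dotProduct_left (c : R) (e m : Fin 3 → R) : (c • e ⨯₃ m) ⬝ᵥ e = 0 := by
  rw [smul_dotProduct, dotProduct_comm (e ⨯₃ m), dot_self_cross, smul_zero]

end

theorem eq_fieldMatrix_of_transpose_eq_neg {σ : Matrix (Fin 4) (Fin 4) ℝ} (hσ : σᵀ = -σ) :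
    σ = fieldMatrix (eVec σ) (mVec σ) := by
  have hsk : ∀ i j, σ j i = -σ i j := fun i j => congrFun (congrFun hσ i) j
  have hdiag : ∀ i, σ i i = 0 := fun i => by linarith [hsk i i]
  ext i j
  fin_cases i <;> fin_cases j <;>
    simp [fieldMatrix, eVec, mVec, hdiag, hsk 0, hsk 2 1, hsk 3 2, hsk 1 3]

section

variable {K : Type*} [Field K] {e m : Fin 3 → K}

theorem inv_dot_self_smul_cross_cross_left (he : e ⬝ᵥ e ≠ 0) (horth : e ⬝ᵥ m = 0) :
    ((e ⬝ᵥ e)⁻¹ • e ⨯₃ m) ⨯₃ e = m := by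
  rw [LinearMap.map_smul₂, cross_cross_eq_smul_sub_smul, dotProduct_comm m, horth, zero_smul,
    sub_zero, inv_smul_smul₀ he]

theorem inv_dot_self_smul_cross_cross_right (hnorm : e ⬝ᵥ e = m ⬝ᵥ m) (he : e ⬝ᵥ e ≠ 0)
    (horth : e ⬝ᵥ m = 0) : ((e ⬝ᵥ e)⁻¹ • e ⨯₃ m) ⨯₃ m = -e := by
  rw [LinearMap.map_smul₂, cross_cross_eq_smul_sub_smul, horth, zero_smul, zero_sub, ← hnorm,
    smul_neg, inv_smul_smul₀ he]

end

theorem Real.sqrt_cross_dotProduct_cross {e m : Fin 3 → ℝ} (hnorm : e ⬝ᵥ e = m ⬝ᵥ m)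
    (horth : e ⬝ᵥ m = 0) : √(e ⨯₃ m ⬝ᵥ e ⨯₃ m) = e ⬝ᵥ e := by
  have he_nonneg : 0 ≤ e ⬝ᵥ e := Finset.sum_nonneg fun i _ => mul_self_nonneg (e i)
  rw [cross_dot_cross, dotProduct_comm m, horth, ← hnorm, zero_mul, sub_zero,
    Real.sqrt_mul_self he_nonneg]

theorem Real.sqrt_one_sub_div_one_add {β : ℝ} (hβ : β ∈ Set.Ioo (-1 : ℝ) 1) :
    √((1 - β) / (1 + β)) = 1 / √(1 - β ^ 2) * (1 - β) := by
  obtain ⟨hβ₁, hβ₂⟩ := hβ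
  have ha : 0 < 1 - β := by linarith
  have hb : 0 < 1 + β := by linarith
  have hsplit : √(1 - β ^ 2) = √(1 - β) * √(1 + β) := by
    rw [← Real.sqrt_mul ha.le]; ring_nf
  have := Real.sqrt_pos.2 ha
  have := Real.sqrt_pos.2 hb
  rw [hsplit, Real.sqrt_div ha.le]
  field_simp
  rw [Real.sq_sqrt ha.le]

/-- Boosting σ₀ ∈ Σ₀ along the direction n = e₀ × m₀ / ‖e₀ × m₀‖ with velocity β
rescales it by the Doppler factor λ_β = √((1−β)/(1+β)): B_β σ₀ B_βᵀ = λ_β • σ₀. -/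
theorem stmt6 (σ₀ : Matrix (Fin 4) (Fin 4) ℝ) (e₀ m₀ : Fin 3 → ℝ)
    (hskew : σ₀ᵀ = -σ₀) (he : eVec σ₀ = e₀) (hm : mVec σ₀ = m₀)
    (hnorm : (∑ i, e₀ i ^ 2) = ∑ i, m₀ i ^ 2)
    (hne : (∑ i, e₀ i ^ 2) ≠ 0)
    (horth : (∑ i, e₀ i * m₀ i) = 0)
    (β : ℝ) (hβ : β ∈ Set.Ioo (-1 : ℝ) 1)
    (c : Fin 3 → ℝ)
    (hc : c = ![e₀ 1 * m₀ 2 - e₀ 2 * m₀ 1,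
                e₀ 2 * m₀ 0 - e₀ 0 * m₀ 2,
                e₀ 0 * m₀ 1 - e₀ 1 * m₀ 0])
    (n : Fin 3 → ℝ) (hn : n = fun i => c i / Real.sqrt (∑ j, c j ^ 2))
    (γ : ℝ) (hγ : γ = 1 / Real.sqrt (1 - β ^ 2))
    (B : Matrix (Fin 4) (Fin 4) ℝ)
    (hB : B = !![γ, -γ * β * n 0, -γ * β * n 1, -γ * β * n 2;
                 -γ * β * n 0, 1 + (γ - 1) * n 0 * n 0, (γ - 1) * n 0 * n 1, (γ - 1) * n 0 * n 2;
                 -γ * β * n 1, (γ - 1) * n 1 * n 0, 1 + (γ - 1) * n 1 * n 1, (γ - 1) * n 1 * n 2;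
                 -γ * β * n 2, (γ - 1) * n 2 * n 0, (γ - 1) * n 2 * n 1, 1 + (γ - 1) * n 2 * n 2]) :
    B * σ₀ * Bᵀ = Real.sqrt ((1 - β) / (1 + β)) • σ₀ := by
  have hsum_sq : ∀ v : Fin 3 → ℝ, ∑ i, v i ^ 2 = v ⬝ᵥ v := fun v => by simp [dotProduct, sq]
  rw [hsum_sq, hsum_sq] at hnorm
  rw [hsum_sq] at hne
  have hn' : n = (e₀ ⬝ᵥ e₀)⁻¹ • e₀ ⨯₃ m₀ := by
    rw [hn, hsum_sq, hc, ← cross_apply, Real.sqrt_cross_dotProduct_cross hnorm horth]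
    ext i
    simp [div_eq_inv_mul]
  rw [eq_fieldMatrix_of_transpose_eq_neg hskew, he, hm, hB, ← boostMatrix, hγ,
    Real.sqrt_one_sub_div_one_add hβ, hn']
  exact boostMatrix_mul_fieldMatrix_mul_transpose _ _ (smul_cross_dotProduct_left _ _ _)
    (inv_dot_self_smul_cross_cross_left hne horth)
    (inv_dot_self_smul_cross_cross_right hnorm hne horth)
end
end
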